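/- In the Loidreau–Overbeck setting, assume rk_F(λ_(n−t−k)(E)_a⃗) = t. Then the decoding matrix satisfies rk_F(L) = n − 1. -/

import Mathlib

/-!
The rows of `L` span `B ⊔ W`, where `B` is the row space of `λ_{n-t-1}(β)` and `W` that of
`λ_{n-t-k}(E)`: the rows of `λ_{n-t-k}(C(M))` are `F`-combinations of rows of `λ_{n-t-1}(β)`.

A combination `∑_{u<d} g_u ρ_u(β)` is, block by block, the skew polynomial `∑ g_u X^u` evaluated
at `a_i` on `β⁽ⁱ⁾`. The Lam–Leroy bound (a nonzero skew polynomial of degree `< d` has fewer than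
`d` independent roots over pairwise non-`σ`-conjugate points; induct by dividing off `X - a'` at
a root) and rank–nullity in each block show that a nonzero such combination has sum-rank weight
`> n - d`. Hence the rows of `λ_{n-t-1}(β)` are independent, every nonzero vector of `B` has
weight `> t`, while every vector of `W` has weight `≤ wt(E) = t`. So `B ⊓ W = 0` and
`rk L = (n - t - 1) + t`.
-/

namespace Stmt5

/-- `genNorm σ a i = σ^(i-1)(a) ⋯ σ(a) · a`, the generalized power function `N_i(a)`. -/
def genNorm {F : Type} [Field F] (σ : F ≃+* F) (a : F) : ℕ → F
  | 0 => 1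
  | i + 1 => (⇑σ)^[i] a * genNorm σ a i

/-- Generalized operator `D_a^i(b) = σ^i(b) · N_i(a)` for `i ∈ ℕ`. -/
def opev {F : Type} [Field F] (σ : F ≃+* F) (a b : F) (i : ℕ) : F :=
  (⇑σ)^[i] b * genNorm σ a i

/-- `b` is σ-conjugate to `a`, i.e. `b = σ(c)·a·c⁻¹` for some nonzero `c`. -/
def SConj {F : Type} [Field F] (σ : F ≃+* F) (a b : F) : Prop :=
  ∃ c : F, c ≠ 0 ∧ b = σ c * a * c⁻¹

/-- σ-generalized Moore matrix `λ_d(x)_a⃗` w.r.t. the length partition `nn`: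
its row `r` applies `D_{a_i}^r` entrywise to the `i`-th block of `x`. -/
def moore {F : Type} [Field F] (σ : F ≃+* F) {ℓ : ℕ} (nn : Fin ℓ → ℕ) (aa : Fin ℓ → F)
    (d : ℕ) (x : (Σ i : Fin ℓ, Fin (nn i)) → F) :
    Matrix (Fin d) (Σ i : Fin ℓ, Fin (nn i)) F :=
  Matrix.of fun r p => opev σ (aa p.1) (x p) (r : ℕ)

/-- `λ_d(X)_a⃗` for a matrix `X`: the stack of `λ_d(x_j)_a⃗` over the rows of `X`. -/
def mooreMat {F : Type} [Field F] (σ : F ≃+* F) {ℓ : ℕ} (nn : Fin ℓ → ℕ) (aa : Fin ℓ → F)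
    {s : ℕ} (d : ℕ) (X : Matrix (Fin s) (Σ i : Fin ℓ, Fin (nn i)) F) :
    Matrix (Fin s × Fin d) (Σ i : Fin ℓ, Fin (nn i)) F :=
  Matrix.of fun r p => opev σ (aa p.1) (X r.1 p) (r.2 : ℕ)

/-- `rk_q` of a vector: the `K`-dimension of the `K`-span of its entries. -/
noncomputable def rkq (K : Type) [Field K] {F : Type} [Field F] [Algebra K F] {ι : Type}
    (v : ι → F) : ℕ :=
  Module.finrank K (Submodule.span K (Set.range v))

/-- `rk_q` of a matrix: the `K`-dimension of the `K`-span of its columns. -/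
noncomputable def rkqMat (K : Type) [Field K] {F : Type} [Field F] [Algebra K F]
    {s : ℕ} {ι : Type} (X : Matrix (Fin s) ι F) : ℕ :=
  Module.finrank K (Submodule.span K (Set.range fun j : ι => fun r : Fin s => X r j))

/-- Sum-rank weight of a blockwise vector. -/
noncomputable def wtV (K : Type) [Field K] {F : Type} [Field F] [Algebra K F] {ℓ : ℕ}
    (nn : Fin ℓ → ℕ) (x : (Σ i : Fin ℓ, Fin (nn i)) → F) : ℕ :=
  ∑ i, rkq K fun μ : Fin (nn i) => x ⟨i, μ⟩

/-- Sum-rank weight of a blockwise matrix. -/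
noncomputable def wtM (K : Type) [Field K] {F : Type} [Field F] [Algebra K F] {s ℓ : ℕ}
    (nn : Fin ℓ → ℕ) (X : Matrix (Fin s) (Σ i : Fin ℓ, Fin (nn i)) F) : ℕ :=
  ∑ i, rkqMat K (Matrix.of fun (r : Fin s) (μ : Fin (nn i)) => X r ⟨i, μ⟩)

/-- Codeword `C(M) = M · λ_k(β)_a⃗` of the `s`-interleaved linearized Reed–Solomon code. -/
def codeword {F : Type} [Field F] (σ : F ≃+* F) {ℓ : ℕ} (nn : Fin ℓ → ℕ) (aa : Fin ℓ → F)
    (β : (Σ i : Fin ℓ, Fin (nn i)) → F) {s : ℕ} (k : ℕ) (M : Matrix (Fin s) (Fin k) F) :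
    Matrix (Fin s) (Σ i : Fin ℓ, Fin (nn i)) F :=
  M * moore σ nn aa k β

/-- Loidreau–Overbeck decoding matrix: the stack of `λ_{n-t-1}(β)_a⃗` and
`λ_{n-t-k}(r_j)_a⃗` for the rows `r_j` of `R`. -/
def LOmat {F : Type} [Field F] (σ : F ≃+* F) {ℓ : ℕ} (nn : Fin ℓ → ℕ) (aa : Fin ℓ → F)
    (β : (Σ i : Fin ℓ, Fin (nn i)) → F) {s : ℕ}
    (R : Matrix (Fin s) (Σ i : Fin ℓ, Fin (nn i)) F) (n t k : ℕ) :
    Matrix (Fin (n - t - 1) ⊕ Fin s × Fin (n - t - k)) (Σ i : Fin ℓ, Fin (nn i)) F :=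
  Matrix.of fun r p =>
    match r with
    | Sum.inl u => opev σ (aa p.1) (β p) (u : ℕ)
    | Sum.inr ju => opev σ (aa p.1) (R ju.1 p) (ju.2 : ℕ)

open Module Submodule Finset

section SkewEvaluation

variable {K F : Type} [Field K] [Field F] [Algebra K F] (σ : F ≃+* F)

theorem genNorm_add (a : F) (u h : ℕ) :
    genNorm σ a (u + h) = (⇑σ)^[u] (genNorm σ a h) * genNorm σ a u := by
  induction h with
  | zero => simp [genNorm, iterate_map_one]
  | succ h ih =>
    rw [← add_assoc, genNorm, genNorm, ih, iterate_map_mul, Function.iterate_add_apply]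
    ring

theorem opev_index_zero (a x : F) : opev σ a x 0 = x := by
  simp [opev, genNorm]

theorem opev_add (a x y : F) (m : ℕ) : opev σ a (x + y) m = opev σ a x m + opev σ a y m := by
  simp only [opev, iterate_map_add, add_mul]

theorem opev_sum {ι : Type*} (a : F) (s : Finset ι) (f : ι → F) (m : ℕ) :
    opev σ a (∑ x ∈ s, f x) m = ∑ x ∈ s, opev σ a (f x) m := by
  simp only [opev, ← RingAut.coe_pow, map_sum, sum_mul]

theorem opev_mul_opev (a b c : F) (u h : ℕ) :
    opev σ a (c * opev σ a b h) u = (⇑σ)^[u] c * opev σ a b (u + h) := by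
  simp only [opev, iterate_map_mul, genNorm_add, Function.iterate_add_apply]
  ring

theorem opev_sub_mul (a a' x : F) (j : ℕ) :
    opev σ a (σ x * a - a' * x) j = opev σ a x (j + 1) - (⇑σ)^[j] a' * opev σ a x j := by
  simp only [opev, genNorm, iterate_map_sub, iterate_map_mul, ← Function.iterate_succ_apply]
  ring

variable (hσK : ∀ k : K, σ (algebraMap K F k) = algebraMap K F k)

def opevₗ (a : F) (j : ℕ) : F →ₗ[K] F where
  toFun x := opev σ a x j
  map_add' x y := opev_add σ a x y j
  map_smul' k x := by
    simp only [opev, Algebra.smul_def, iterate_map_mul, Function.iterate_fixed (hσK k),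
      RingHom.id_apply]
    ring

/-- Operator evaluation `x ↦ ∑_{m < D} c_m D_a^m(x)` of the skew polynomial
`∑_{m < D} c_m X^m`. -/
def skewEvalₗ (a : F) (c : ℕ → F) (D : ℕ) : F →ₗ[K] F :=
  ∑ m ∈ range D, c m • opevₗ σ hσK a m

theorem skewEvalₗ_apply (a : F) (c : ℕ → F) (D : ℕ) (x : F) :
    skewEvalₗ σ hσK a c D x = ∑ m ∈ range D, c m * opev σ a x m := by
  simp [skewEvalₗ, opevₗ]

/-- Operator evaluation of the linear skew polynomial `X - a'`. -/
def linFactorₗ (a a' : F) : F →ₗ[K] F where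
  toFun x := σ x * a - a' * x
  map_add' x y := by simp only [map_add]; ring
  map_smul' k x := by simp only [Algebra.smul_def, map_mul, hσK, RingHom.id_apply]; ring

theorem linFactorₗ_apply (a a' x : F) : linFactorₗ σ hσK a a' x = σ x * a - a' * x := rfl

/-- Coefficients of the right quotient of `∑_{m ≤ D} c_m X^m` by `X - a'`. -/
def skewQuot (c : ℕ → F) (a' : F) (D j : ℕ) : F :=
  if j < D then c (j + 1) + skewQuot c a' D (j + 1) * (⇑σ)^[j + 1] a' else 0
termination_by D - j

def skewRem (c : ℕ → F) (a' : F) (D : ℕ) : F := c 0 + skewQuot σ c a' D 0 * a'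

theorem skewQuot_of_le (c : ℕ → F) (a' : F) {D j : ℕ} (h : D ≤ j) :
    skewQuot σ c a' D j = 0 := by
  rw [skewQuot, if_neg (by omega)]

theorem skewQuot_of_lt (c : ℕ → F) (a' : F) {D j : ℕ} (h : j < D) :
    skewQuot σ c a' D j = c (j + 1) + skewQuot σ c a' D (j + 1) * (⇑σ)^[j + 1] a' := by
  rw [skewQuot, if_pos h]

theorem skewEvalₗ_eq_quot_add_rem (c : ℕ → F) (a a' x : F) (D : ℕ) :
    skewEvalₗ σ hσK a c (D + 1) x =
      skewEvalₗ σ hσK a (skewQuot σ c a' D) D (linFactorₗ σ hσK a a' x) +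
        skewRem σ c a' D * x := by
  set g := skewQuot σ c a' D
  set h : ℕ → F := fun m => g m * (⇑σ)^[m] a' * opev σ a x m
  have htelescope : ∑ j ∈ range D, h (j + 1) = ∑ j ∈ range D, h j - h 0 := by
    have e := sum_range_succ' h D
    rw [sum_range_succ, show h D = 0 by simp [h, g, skewQuot_of_le]] at e
    linear_combination -e
  have hc : ∀ j ∈ range D,
      c (j + 1) * opev σ a x (j + 1) = g j * opev σ a x (j + 1) - h (j + 1) :=
    fun j hj => by simp only [g, h, skewQuot_of_lt σ c a' (mem_range.1 hj)]; ring
  rw [skewEvalₗ_apply, sum_range_succ', sum_congr rfl hc, sum_sub_distrib, htelescope,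
    skewEvalₗ_apply, linFactorₗ_apply]
  simp only [opev_sub_mul, mul_sub, sum_sub_distrib, opev_index_zero, skewRem, h, g,
    Function.iterate_zero, id_eq]
  ring_nf

theorem eq_zero_of_skewRem_eq_zero {c : ℕ → F} {a' : F} {D : ℕ} (hr : skewRem σ c a' D = 0)
    (hg : ∀ j < D, skewQuot σ c a' D j = 0) : ∀ m < D + 1, c m = 0 := by
  have hg' : ∀ j, skewQuot σ c a' D j = 0 := fun j =>
    if h : j < D then hg j h else skewQuot_of_le σ c a' (not_lt.1 h)
  rintro (_ | j) hj
  · simpa [skewRem, hg'] using hr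
  · simpa [hg'] using (skewQuot_of_lt σ c a' (D := D) (j := j) (by omega)).symm

end SkewEvaluation

section LinearAlgebra

variable {K V W X : Type*} [Field K] [AddCommGroup V] [Module K V] [AddCommGroup W] [Module K W]
  [AddCommGroup X] [Module K X] [FiniteDimensional K V]

theorem finrank_le_finrank_map_add_finrank_ker (f : V →ₗ[K] W) (p : Submodule K V) :
    finrank K p ≤ finrank K (p.map f) + finrank K (LinearMap.ker f) := by
  have hker : finrank K (LinearMap.ker (f.domRestrict p)) ≤ finrank K (LinearMap.ker f) := by
    rw [← finrank_map_subtype_eq p]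
    refine finrank_mono ?_
    rintro _ ⟨y, hy, rfl⟩
    simpa using hy
  have := (f.domRestrict p).finrank_range_add_finrank_ker
  rw [LinearMap.range_domRestrict] at this
  omega

theorem finrank_ker_comp_le [FiniteDimensional K W] (f : W →ₗ[K] X) (g : V →ₗ[K] W) :
    finrank K (LinearMap.ker (f ∘ₗ g)) ≤
      finrank K (LinearMap.ker f) + finrank K (LinearMap.ker g) := by
  have hmap : (LinearMap.ker (f ∘ₗ g)).map g ≤ LinearMap.ker f := by
    rw [LinearMap.ker_comp]
    exact map_comap_le g _
  have := finrank_le_finrank_map_add_finrank_ker g (LinearMap.ker (f ∘ₗ g))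
  have := finrank_mono hmap
  omega

end LinearAlgebra

section ZeroBound

variable {K F : Type} [Field K] [Field F] [Algebra K F] {σ : F ≃+* F}

theorem SConj.symm {a b : F} (h : SConj σ a b) : SConj σ b a := by
  obtain ⟨c, hc, rfl⟩ := h
  refine ⟨c⁻¹, inv_ne_zero hc, ?_⟩
  have : σ c ≠ 0 := by simpa using hc
  rw [map_inv₀]
  field_simp

theorem SConj.trans {a b d : F} (hab : SConj σ a b) (hbd : SConj σ b d) : SConj σ a d := by
  obtain ⟨c, hc, rfl⟩ := hab
  obtain ⟨e, he, rfl⟩ := hbd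
  exact ⟨e * c, mul_ne_zero he hc, by rw [map_mul, mul_inv]; ring⟩

variable (hσK : ∀ k : K, σ (algebraMap K F k) = algebraMap K F k)
include hσK

theorem sConj_of_mem_ker_linFactorₗ {a a' x : F}
    (hx : x ∈ LinearMap.ker (linFactorₗ σ hσK a a')) (hx0 : x ≠ 0) : SConj σ a a' := by
  refine ⟨x, hx0, ?_⟩
  rw [LinearMap.mem_ker, linFactorₗ_apply, sub_eq_zero] at hx
  field_simp
  exact hx.symm

variable (hfixK : ∀ x : F, σ x = x → x ∈ Set.range (algebraMap K F))
include hfixK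

/-- A root `b ≠ 0` of `X - a'` spans all roots: two roots have a `σ`-fixed ratio. -/
theorem finrank_ker_linFactorₗ_le_one {a : F} (ha : a ≠ 0) (a' : F) :
    finrank K (LinearMap.ker (linFactorₗ σ hσK a a')) ≤ 1 := by
  by_cases hbot : LinearMap.ker (linFactorₗ σ hσK a a') = ⊥
  · rw [hbot, finrank_bot]
    exact zero_le_one
  obtain ⟨b, hb, hb0⟩ := (Submodule.ne_bot_iff _).1 hbot
  refine (finrank_mono fun x hx => ?_).trans (finrank_span_singleton hb0).le
  rw [LinearMap.mem_ker, linFactorₗ_apply, sub_eq_zero] at hb hx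
  have hσb : σ b ≠ 0 := by simpa using hb0
  have hfix : σ (x * b⁻¹) = x * b⁻¹ := by
    rw [map_mul, map_inv₀, ← div_eq_mul_inv, ← div_eq_mul_inv, div_eq_div_iff hσb hb0]
    apply mul_right_cancel₀ ha
    linear_combination b * hx - x * hb
  obtain ⟨k, hk⟩ := hfixK _ hfix
  exact mem_span_singleton.2 ⟨k, by rw [Algebra.smul_def, hk, inv_mul_cancel_right₀ hb0]⟩

theorem sum_finrank_ker_linFactorₗ_le_one {ι : Type*} [Fintype ι] {a : ι → F}
    (ha0 : ∀ i, a i ≠ 0) (haconj : Pairwise fun i j => ¬ SConj σ (a i) (a j)) (a' : F) :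
    ∑ i, finrank K (LinearMap.ker (linFactorₗ σ hσK (a i) a')) ≤ 1 := by
  by_cases hbot : ∀ i, LinearMap.ker (linFactorₗ σ hσK (a i) a') = ⊥
  · rw [sum_eq_zero fun i _ => by rw [hbot i, finrank_bot]]
    exact zero_le_one
  push Not at hbot
  obtain ⟨i₀, hi₀⟩ := hbot
  obtain ⟨x, hx, hx0⟩ := (Submodule.ne_bot_iff _).1 hi₀
  have hconj := sConj_of_mem_ker_linFactorₗ hσK hx hx0
  rw [Fintype.sum_eq_single i₀ fun i hi => ?_]
  · exact finrank_ker_linFactorₗ_le_one hσK hfixK (ha0 i₀) a'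
  rw [(LinearMap.ker_eq_bot').2 fun y hy => by_contra fun hy0 => haconj hi
    ((sConj_of_mem_ker_linFactorₗ hσK hy hy0).trans hconj.symm), finrank_bot]

/-- The Lam–Leroy bound. -/
theorem sum_finrank_ker_skewEvalₗ_lt [FiniteDimensional K F] {ι : Type*} [Fintype ι]
    {a : ι → F} (ha0 : ∀ i, a i ≠ 0) (haconj : Pairwise fun i j => ¬ SConj σ (a i) (a j))
    (D : ℕ) {c : ℕ → F} (hc : ∃ m < D, c m ≠ 0) :
    ∑ i, finrank K (LinearMap.ker (skewEvalₗ σ hσK (a i) c D)) < D := by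
  induction D generalizing c with
  | zero => simp at hc
  | succ D ih =>
    by_cases hbot : ∀ i, LinearMap.ker (skewEvalₗ σ hσK (a i) c (D + 1)) = ⊥
    · rw [sum_eq_zero fun i _ => by rw [hbot i, finrank_bot]]
      exact D.succ_pos
    push Not at hbot
    obtain ⟨i₀, hi₀⟩ := hbot
    obtain ⟨b, hb, hb0⟩ := (Submodule.ne_bot_iff _).1 hi₀
    -- divide by `X - a'`, where `a'` is chosen so that `b` is a root of `X - a'` at `a i₀`
    set a' := σ b * a i₀ * b⁻¹
    have hroot : linFactorₗ σ hσK (a i₀) a' b = 0 := by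
      rw [linFactorₗ_apply, inv_mul_cancel_right₀ hb0, sub_self]
    have hrem : skewRem σ c a' D = 0 := by
      rw [LinearMap.mem_ker, skewEvalₗ_eq_quot_add_rem σ hσK c (a i₀) a' b, hroot, map_zero,
        zero_add] at hb
      exact (mul_eq_zero.1 hb).resolve_right hb0
    have hquot : ∃ j < D, skewQuot σ c a' D j ≠ 0 := by
      by_contra! h
      obtain ⟨m, hm, hcm⟩ := hc
      exact hcm (eq_zero_of_skewRem_eq_zero σ hrem h m hm)
    have hfactor : ∀ i, skewEvalₗ σ hσK (a i) c (D + 1) =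
        skewEvalₗ σ hσK (a i) (skewQuot σ c a' D) D ∘ₗ linFactorₗ σ hσK (a i) a' := by
      intro i
      ext x
      rw [skewEvalₗ_eq_quot_add_rem σ hσK c (a i) a' x, hrem, zero_mul, add_zero]
      rfl
    calc ∑ i, finrank K (LinearMap.ker (skewEvalₗ σ hσK (a i) c (D + 1)))
        ≤ ∑ i, (finrank K (LinearMap.ker (skewEvalₗ σ hσK (a i) (skewQuot σ c a' D) D))
            + finrank K (LinearMap.ker (linFactorₗ σ hσK (a i) a'))) :=
          sum_le_sum fun i _ => hfactor i ▸ finrank_ker_comp_le _ _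
      _ < D + 1 := by
        rw [sum_add_distrib]
        have := sum_finrank_ker_linFactorₗ_le_one hσK hfixK ha0 haconj a'
        have := ih hquot
        omega

end ZeroBound

section SumRankWeight

variable {K F : Type} [Field K] [Field F] [Algebra K F]

theorem rkq_comp_le {V ι : Type} [AddCommGroup V] [Module K V] [FiniteDimensional K V]
    (f : V →ₗ[K] F) (w : ι → V) : rkq K (f ∘ w) ≤ finrank K (span K (Set.range w)) := by
  rw [rkq, Set.range_comp, ← map_span]
  exact finrank_map_le f _

theorem card_le_rkq_comp_add_finrank_ker {V ι : Type} [AddCommGroup V] [Module K V]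
    [FiniteDimensional K V] [Fintype ι] (f : V →ₗ[K] F) {w : ι → V}
    (hw : LinearIndependent K w) :
    Fintype.card ι ≤ rkq K (f ∘ w) + finrank K (LinearMap.ker f) := by
  rw [rkq, Set.range_comp, ← map_span, ← finrank_span_eq_card hw]
  exact finrank_le_finrank_map_add_finrank_ker f _

theorem wtV_zero {ℓ : ℕ} (nn : Fin ℓ → ℕ) :
    wtV K nn (0 : (Σ i : Fin ℓ, Fin (nn i)) → F) = 0 :=
  sum_eq_zero fun i _ => by
    rw [rkq, span_eq_bot.2 (by rintro _ ⟨μ, rfl⟩; rfl), finrank_bot]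

variable {σ : F ≃+* F} (hσK : ∀ k : K, σ (algebraMap K F k) = algebraMap K F k)
  {ℓ : ℕ} {nn : Fin ℓ → ℕ} {aa : Fin ℓ → F}
include hσK

theorem wtV_le_wtM_of_mem_span_mooreMat [FiniteDimensional K F] {s d : ℕ}
    {E : Matrix (Fin s) (Σ i : Fin ℓ, Fin (nn i)) F} {v : (Σ i : Fin ℓ, Fin (nn i)) → F}
    (hv : v ∈ span F (Set.range (mooreMat σ nn aa d E).row)) : wtV K nn v ≤ wtM K nn E := by
  obtain ⟨w, rfl⟩ := (mem_span_range_iff_exists_fun F).1 hv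
  refine sum_le_sum fun i _ => ?_
  -- the `i`-th block of `v` is the image of the columns of `E⁽ⁱ⁾` under a `K`-linear map
  let Ψ : (Fin s → F) →ₗ[K] F :=
    ∑ rj : Fin s × Fin d, w rj • opevₗ σ hσK (aa i) rj.2 ∘ₗ LinearMap.proj rj.1
  have hblock :
      (fun μ : Fin (nn i) => (∑ rj, w rj • (mooreMat σ nn aa d E).row rj) ⟨i, μ⟩) =
        Ψ ∘ fun μ r => E r ⟨i, μ⟩ := by
    funext μ
    simp [Ψ, mooreMat, opevₗ, Matrix.row]
  rw [hblock]
  exact rkq_comp_le Ψ _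

variable [FiniteDimensional K F] (hfixK : ∀ x : F, σ x = x → x ∈ Set.range (algebraMap K F))
  (ha0 : ∀ i, aa i ≠ 0) (haconj : Pairwise fun i j => ¬ SConj σ (aa i) (aa j))
  {β : (Σ i : Fin ℓ, Fin (nn i)) → F}
  (hβ : ∀ i, LinearIndependent K fun μ : Fin (nn i) => β ⟨i, μ⟩)
include hfixK ha0 haconj hβ

theorem sum_lt_wtV_moore_comb_add {d : ℕ} {g : Fin d → F} (hg : g ≠ 0) :
    ∑ i, nn i < wtV K nn (∑ u, g u • (moore σ nn aa d β).row u) + d := by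
  set c : ℕ → F := fun m => if h : m < d then g ⟨m, h⟩ else 0
  have hc : ∃ m < d, c m ≠ 0 := by
    obtain ⟨u, hu⟩ := Function.ne_iff.1 hg
    exact ⟨u, u.2, by simpa [c] using hu⟩
  have hblock : ∀ i,
      (fun μ : Fin (nn i) => (∑ u, g u • (moore σ nn aa d β).row u) ⟨i, μ⟩) =
        skewEvalₗ σ hσK (aa i) c d ∘ fun μ => β ⟨i, μ⟩ := fun i => by
    funext μ
    simp [skewEvalₗ_apply, moore, Matrix.row, ← Fin.sum_univ_eq_sum_range, c]
  calc ∑ i, nn i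
      ≤ ∑ i, (rkq K (fun μ : Fin (nn i) => (∑ u, g u • (moore σ nn aa d β).row u) ⟨i, μ⟩)
          + finrank K (LinearMap.ker (skewEvalₗ σ hσK (aa i) c d))) :=
        sum_le_sum fun i _ => by
          rw [hblock i]
          simpa using card_le_rkq_comp_add_finrank_ker (skewEvalₗ σ hσK (aa i) c d) (hβ i)
    _ < _ := by
      rw [sum_add_distrib]
      exact Nat.add_lt_add_left (sum_finrank_ker_skewEvalₗ_lt hσK hfixK ha0 haconj d hc) _

theorem linearIndependent_moore_row {d : ℕ} (hd : d ≤ ∑ i, nn i) :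
    LinearIndependent F (moore σ nn aa d β).row := by
  rw [Fintype.linearIndependent_iff]
  intro g hg
  by_contra! h
  have := sum_lt_wtV_moore_comb_add hσK hfixK ha0 haconj hβ (Function.ne_iff.2 h)
  rw [hg, wtV_zero] at this
  omega

theorem disjoint_span_moore_span_mooreMat {s d d' : ℕ}
    {E : Matrix (Fin s) (Σ i : Fin ℓ, Fin (nn i)) F} (h : d + wtM K nn E ≤ ∑ i, nn i) :
    Disjoint (span F (Set.range (moore σ nn aa d β).row))
      (span F (Set.range (mooreMat σ nn aa d' E).row)) := by
  rw [disjoint_def]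
  intro v hvB hvW
  obtain ⟨g, rfl⟩ := (mem_span_range_iff_exists_fun F).1 hvB
  by_contra hv
  have hg : g ≠ 0 := by
    rintro rfl
    simp at hv
  have := sum_lt_wtV_moore_comb_add hσK hfixK ha0 haconj hβ hg
  have := wtV_le_wtM_of_mem_span_mooreMat hσK hvW
  omega

end SumRankWeight

theorem sup_span_range_le_of_sub_mem {R M ι : Type*} [Ring R] [AddCommGroup M] [Module R M]
    {p : Submodule R M} {x y : ι → M} (h : ∀ j, x j - y j ∈ p) :
    p ⊔ span R (Set.range x) ≤ p ⊔ span R (Set.range y) := by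
  refine sup_le le_sup_left (span_le.2 ?_)
  rintro _ ⟨j, rfl⟩
  rw [← sub_add_cancel (x j) (y j)]
  exact add_mem (mem_sup_left (h j)) (mem_sup_right (subset_span ⟨j, rfl⟩))

theorem sup_span_range_eq_of_sub_mem {R M ι : Type*} [Ring R] [AddCommGroup M] [Module R M]
    {p : Submodule R M} {x y : ι → M} (h : ∀ j, x j - y j ∈ p) :
    p ⊔ span R (Set.range x) = p ⊔ span R (Set.range y) :=
  le_antisymm (sup_span_range_le_of_sub_mem h)
    (sup_span_range_le_of_sub_mem fun j => neg_sub (x j) (y j) ▸ neg_mem (h j))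

section DecodingMatrix

variable {F : Type} [Field F] {σ : F ≃+* F} {ℓ : ℕ} {nn : Fin ℓ → ℕ}
  {aa : Fin ℓ → F} {β : (Σ i : Fin ℓ, Fin (nn i)) → F} {s k : ℕ}
  {M : Matrix (Fin s) (Fin k) F}
  {E : Matrix (Fin s) (Σ i : Fin ℓ, Fin (nn i)) F} {n t : ℕ}

/-- `ρᵤ(C(M)_j) = ∑ₕ σᵘ(M_{jh}) ρ_{u+h}(β)`, and `u + h < n - t - 1`. -/
theorem LOmat_row_inr_sub_mem (j : Fin s) (u : Fin (n - t - k)) :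
    (LOmat σ nn aa β (codeword σ nn aa β k M + E) n t k).row (Sum.inr (j, u)) -
        (mooreMat σ nn aa (n - t - k) E).row (j, u) ∈
      span F (Set.range (moore σ nn aa (n - t - 1) β).row) := by
  have hidx : ∀ h : Fin k, (u : ℕ) + h < n - t - 1 := fun h => by omega
  have hrow : (LOmat σ nn aa β (codeword σ nn aa β k M + E) n t k).row (Sum.inr (j, u)) -
      (mooreMat σ nn aa (n - t - k) E).row (j, u) =
      ∑ h : Fin k,
        (⇑σ)^[u] (M j h) • (moore σ nn aa (n - t - 1) β).row ⟨u + h, hidx h⟩ := by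
    funext p
    simp [LOmat, mooreMat, moore, codeword, Matrix.mul_apply, Matrix.row, opev_add, opev_sum,
      opev_mul_opev]
  rw [hrow]
  exact sum_mem fun h _ => smul_mem _ _ (subset_span ⟨_, rfl⟩)

theorem span_range_LOmat_row :
    span F (Set.range (LOmat σ nn aa β (codeword σ nn aa β k M + E) n t k).row) =
      span F (Set.range (moore σ nn aa (n - t - 1) β).row) ⊔
        span F (Set.range (mooreMat σ nn aa (n - t - k) E).row) := by
  have hrange : Set.range (LOmat σ nn aa β (codeword σ nn aa β k M + E) n t k).row =
      Set.range (moore σ nn aa (n - t - 1) β).row ∪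
        Set.range fun ju =>
          (LOmat σ nn aa β (codeword σ nn aa β k M + E) n t k).row (Sum.inr ju) := by
    rw [← Set.Sum.elim_range]
    congr
    funext r
    rcases r with u | ju <;> rfl
  rw [hrange, span_union]
  exact sup_span_range_eq_of_sub_mem fun ju => LOmat_row_inr_sub_mem ju.1 ju.2

end DecodingMatrix

theorem LO_rank_eq_general
    {K F : Type} [Field K] [Field F] [Algebra K F] [Fintype F]
    (σ : F ≃+* F)
    (hfix : ∀ x : F, σ x = x ↔ x ∈ Set.range (algebraMap K F))
    {ℓ : ℕ} (nn : Fin ℓ → ℕ) (aa : Fin ℓ → F)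
    (ha0 : ∀ i, aa i ≠ 0)
    (haconj : ∀ i j : Fin ℓ, i ≠ j → ¬ SConj σ (aa i) (aa j))
    (β : (Σ i : Fin ℓ, Fin (nn i)) → F)
    (hβ : ∀ i, LinearIndependent K fun μ : Fin (nn i) => β ⟨i, μ⟩)
    {s : ℕ} {k n t : ℕ} (hn : n = ∑ i, nn i)
    (hk : 1 ≤ k)
    (M : Matrix (Fin s) (Fin k) F)
    (E R : Matrix (Fin s) (Σ i : Fin ℓ, Fin (nn i)) F)
    (hR : R = codeword σ nn aa β k M + E)
    (ht : wtM K nn E = t) (htnk : t ≤ n - k)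
    (hrk : (mooreMat σ nn aa (n - t - k) E).rank = t)
    :
    (LOmat σ nn aa β R n t k).rank = n - 1 := by
  have hσK (x : K) : σ (algebraMap K F x) = algebraMap K F x := (hfix _).2 ⟨x, rfl⟩
  have hfixK (x : F) : σ x = x → x ∈ Set.range (algebraMap K F) := (hfix x).1
  have hB : finrank F (span F (Set.range (moore σ nn aa (n - t - 1) β).row)) = n - t - 1 := by
    rw [finrank_span_eq_card (linearIndependent_moore_row hσK hfixK ha0 haconj hβ (by omega)),
      Fintype.card_fin]
  have hW : finrank F (span F (Set.range (mooreMat σ nn aa (n - t - k) E).row)) = t :=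
    (Matrix.rank_eq_finrank_span_row _).symm.trans hrk
  have hBW : Disjoint (span F (Set.range (moore σ nn aa (n - t - 1) β).row))
      (span F (Set.range (mooreMat σ nn aa (n - t - k) E).row)) :=
    disjoint_span_moore_span_mooreMat hσK hfixK ha0 haconj hβ (by omega)
  have hdim := finrank_sup_add_finrank_inf_eq
    (span F (Set.range (moore σ nn aa (n - t - 1) β).row))
    (span F (Set.range (mooreMat σ nn aa (n - t - k) E).row))
  rw [hBW.eq_bot, finrank_bot, hB, hW, ← span_range_LOmat_row, ← hR,
    ← Matrix.rank_eq_finrank_span_row] at hdim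
  omega

/-- If `rk_F(λ_{n−t−k}(E)_a⃗) = t`, then the Loidreau–Overbeck decoding matrix satisfies
`rk_F(L) = n − 1`. -/
theorem LO_rank_eq
    {K F : Type} [Field K] [Field F] [Algebra K F] [Fintype K] [Fintype F]
    (σ : F ≃+* F)
    (hfix : ∀ x : F, σ x = x ↔ x ∈ Set.range (algebraMap K F))
    {ℓ : ℕ} (hℓ : 1 ≤ ℓ) (nn : Fin ℓ → ℕ) (aa : Fin ℓ → F)
    (ha0 : ∀ i, aa i ≠ 0)
    (haconj : ∀ i j : Fin ℓ, i ≠ j → ¬ SConj σ (aa i) (aa j))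
    (β : (Σ i : Fin ℓ, Fin (nn i)) → F)
    (hβ : ∀ i, LinearIndependent K fun μ : Fin (nn i) => β ⟨i, μ⟩)
    {s : ℕ} (hs : 1 ≤ s) {k n t : ℕ} (hn : n = ∑ i, nn i)
    (hk : 1 ≤ k) (hkn : k ≤ n)
    (M : Matrix (Fin s) (Fin k) F)
    (E R : Matrix (Fin s) (Σ i : Fin ℓ, Fin (nn i)) F)
    (hR : R = codeword σ nn aa β k M + E)
    (ht : wtM K nn E = t) (htnk : t ≤ n - k)
    (hrk : (mooreMat σ nn aa (n - t - k) E).rank = t)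
    :
    (LOmat σ nn aa β R n t k).rank = n - 1 :=
  LO_rank_eq_general σ hfix nn aa ha0 haconj β hβ hn hk M E R hR ht htnk hrk

end Stmt5
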